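/- For 0 < ε₀ < π/2 and r ∈ [0, π/2], arctan( (sin ε₀ · cos r) / sqrt( cos²ε₀ · cos²r + sin²r ) ) ≤ ε₀ · cos r. -/

import Mathlib

/-!
Since `cos² ε₀ cos² r + sin² r = 1 - (sin ε₀ cos r)²`, the left-hand side is `arcsin (sin ε₀ cos r)`.
By concavity of `sin` on `[0, π]`, `cos r · sin ε₀ ≤ sin (cos r · ε₀)`, and `arcsin` is monotone.
-/

open Real

theorem ConcaveOn.smul_le_map_smul {E : Type*} [AddCommGroup E] [Module ℝ E] {s : Set E}
    {f : E → ℝ} (hf : ConcaveOn ℝ s f) (h0 : (0 : E) ∈ s) (hf0 : 0 ≤ f 0) {x : E} (hx : x ∈ s)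
    {t : ℝ} (ht0 : 0 ≤ t) (ht1 : t ≤ 1) : t * f x ≤ f (t • x) := by
  have h := hf.2 h0 hx (sub_nonneg.2 ht1) ht0 (sub_add_cancel 1 t)
  simp only [smul_zero, zero_add, smul_eq_mul] at h
  nlinarith

theorem Real.mul_sin_le_sin_mul {x t : ℝ} (hx0 : 0 ≤ x) (hxπ : x ≤ π) (ht0 : 0 ≤ t)
    (ht1 : t ≤ 1) : t * sin x ≤ sin (t * x) :=
  strictConcaveOn_sin_Icc.concaveOn.smul_le_map_smul ⟨le_rfl, pi_pos.le⟩ sin_zero.ge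
    ⟨hx0, hxπ⟩ ht0 ht1

theorem Real.cos_sq_mul_cos_sq_add_sin_sq (a b : ℝ) :
    cos a ^ 2 * cos b ^ 2 + sin b ^ 2 = 1 - (sin a * cos b) ^ 2 := by
  rw [cos_sq' a, sin_sq b]
  ring

theorem arctan_le_eps_cos (ε₀ : ℝ) (hε₀ : 0 < ε₀) (hε₀' : ε₀ < π / 2)
    (r : ℝ) (hr : r ∈ Set.Icc 0 (π / 2)) :
    Real.arctan ((Real.sin ε₀ * Real.cos r) /
        Real.sqrt ((Real.cos ε₀) ^ 2 * (Real.cos r) ^ 2 + (Real.sin r) ^ 2)) ≤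
      ε₀ * Real.cos r := by
  have hcos0 : 0 ≤ cos r := cos_nonneg_of_mem_Icc ⟨by linarith [pi_pos, hr.1], hr.2⟩
  have hcos1 : cos r ≤ 1 := cos_le_one r
  have hsin0 : 0 ≤ sin ε₀ := sin_nonneg_of_nonneg_of_le_pi hε₀.le (by linarith [pi_pos])
  have hsin1 : sin ε₀ < 1 := by
    simpa using sin_lt_sin_of_lt_of_le_pi_div_two (by linarith [pi_pos]) le_rfl hε₀'
  have hu : sin ε₀ * cos r ∈ Set.Ioo (-1) 1 := ⟨by nlinarith, by nlinarith⟩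
  have hangle : ε₀ * cos r ∈ Set.Icc (-(π / 2)) (π / 2) :=
    ⟨by nlinarith [pi_pos], by nlinarith⟩
  have hsin_mul : sin ε₀ * cos r ≤ sin (ε₀ * cos r) := by
    rw [mul_comm, mul_comm ε₀]
    exact mul_sin_le_sin_mul hε₀.le (by linarith [pi_pos]) hcos0 hcos1
  rw [cos_sq_mul_cos_sq_add_sin_sq, ← arcsin_eq_arctan hu]
  exact (arcsin_le_iff_le_sin (Set.Ioo_subset_Icc_self hu) hangle).2 hsin_mul
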